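/- Let X be a complex Hilbert space, let M₁, …, M_N (N ≥ 2) be closed subspaces of X, let P_k denote the orthogonal projection of X onto M_k, let M = M₁ ∩ … ∩ M_N with orthogonal projection P_M, and let T = P_N ⋯ P₁. Then ‖T^n x − P_M x‖ → 0 as n → ∞ for every x ∈ X, and there exists a dense linear subspace X_∞ of X such that for all x ∈ X_∞ and every real number α > 0 one has n^α · ‖T^n x − P_M x‖ → 0 as n → ∞ (super-polynomially fast convergence). -/

import Mathlib

/-!
The operator `T = P_N ⋯ P_1` satisfies `‖x - T x‖² ≤ N (‖x‖² - ‖T x‖²)`: each projection does so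
with constant `1`, and the constants add up under composition by Cauchy–Schwarz. Consequently
`T` is a contraction whose fixed space is `M`, and `ran (I - T) ⊥ M`, so that
`P_M Tⁿ = P_M` and `ran (I - T)` is dense in `M^⊥`.

Telescoping the inequality along an orbit gives `‖Tⁿ (I - T)‖ = O(n^{-1/2})`, and splitting `n`
in halves `‖Tⁿ (I - T)ᵏ‖ = O(n^{-k/2})`. Hence `Tⁿ x - P_M x` decays faster than any power of
`n` on `X_∞ = M + ⋂ₖ ran (I - T)ᵏ`. A Mittag-Leffler argument shows that `⋂ₖ ran (I - T)ᵏ` is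
dense in `M^⊥`, so `X_∞` is dense, and since the `Tⁿ` are uniformly bounded, convergence on
`X_∞` extends to all of `X`.
-/

open Filter Topology

/-- The orthogonal projection onto a subspace, as an endomorphism. -/
noncomputable def projOnto {X : Type*} [NormedAddCommGroup X] [InnerProductSpace ℂ X]
    (K : Submodule ℂ X) [Submodule.HasOrthogonalProjection K] : X →L[ℂ] X :=
  K.subtypeL.comp (Submodule.orthogonalProjectionOnto K)

/-- The product `P_k ⋯ P_1` of the orthogonal projections onto the first `k` of the
subspaces `M 0, …, M (N-1)` (applied in order: first `P_1 = projOnto (M 0)`, etc.);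
for `k = N` this is the operator `T = P_N ⋯ P_1` of the method of cyclic alternating
projections. -/
noncomputable def cycleProd {X : Type*} [NormedAddCommGroup X] [InnerProductSpace ℂ X]
    {N : ℕ} (M : Fin N → Submodule ℂ X) [∀ i, CompleteSpace (M i)] (k : ℕ) :
    X →L[ℂ] X :=
  (((List.ofFn fun i => projOnto (M i)).take k).reverse).prod

open Asymptotics

section Powers

variable {𝕜 E : Type*} [NontriviallyNormedField 𝕜] [NormedAddCommGroup E] [NormedSpace 𝕜 E]

lemma norm_pow_apply_le_pow_mul (A : E →L[𝕜] E) {c : ℝ} (hc : ‖A‖ ≤ c) (m : ℕ) (z : E) :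
    ‖(A ^ m) z‖ ≤ c ^ m * ‖z‖ := by
  induction m with
  | zero => simp
  | succ m ih =>
    rw [pow_succ', mul_apply_eq_comp, pow_succ', mul_assoc]
    exact (A.le_opNorm _).trans
      (mul_le_mul hc ih (norm_nonneg _) ((norm_nonneg A).trans hc))

lemma norm_pow_apply_le_of_norm_apply_le {T : E →L[𝕜] E} (hT : ∀ x, ‖T x‖ ≤ ‖x‖) (n : ℕ)
    (x : E) : ‖(T ^ n) x‖ ≤ ‖x‖ := by
  simpa using norm_pow_apply_le_pow_mul T (T.opNorm_le_bound zero_le_one (by simpa using hT)) n x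

lemma tendsto_pow_apply_of_dense {T P : E →L[𝕜] E} (hT : ∀ x, ‖T x‖ ≤ ‖x‖) {S : Set E}
    (hS : Dense S) (hconv : ∀ x ∈ S, Tendsto (fun n : ℕ => (T ^ n) x) atTop (𝓝 (P x)))
    (x : E) : Tendsto (fun n : ℕ => (T ^ n) x) atTop (𝓝 (P x)) := by
  have hbound : ∃ C, ∀ (n : ℕ) (y : E), ‖(T ^ n) y‖ ≤ C * ‖y‖ :=
    ⟨1, fun n y => by rw [one_mul]; exact norm_pow_apply_le_of_norm_apply_le hT n y⟩
  have hequi := ((NormedSpace.equicontinuous_TFAE fun n : ℕ => T ^ n).out 3 1).1 hbound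
  have hclosure := closure_minimal hconv (hequi.isClosed_setOfPred_tendsto P.continuous)
  rw [hS.closure_eq] at hclosure
  exact hclosure (Set.mem_univ x)

end Powers

section Averaged

variable {𝕜 E : Type*} [NontriviallyNormedField 𝕜] [NormedAddCommGroup E] [NormedSpace 𝕜 E]

/-- In a Hilbert space and for `K = α / (1 - α)`, this says that the linear map `T` is
`α`-averaged. -/
def IsAveraged (K : ℝ) (T : E →L[𝕜] E) : Prop :=
  0 ≤ K ∧ ∀ x, ‖x - T x‖ ^ 2 ≤ K * (‖x‖ ^ 2 - ‖T x‖ ^ 2)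

namespace IsAveraged

variable {K L : ℝ} {A B T : E →L[𝕜] E}

lemma norm_apply_le (hT : IsAveraged K T) (x : E) : ‖T x‖ ≤ ‖x‖ := by
  by_contra! hlt
  have hnonpos : K * (‖x‖ ^ 2 - ‖T x‖ ^ 2) ≤ 0 :=
    mul_nonpos_of_nonneg_of_nonpos hT.1 (by nlinarith [norm_nonneg x])
  have hfix : x - T x = 0 := by
    simpa using le_antisymm ((hT.2 x).trans hnonpos) (sq_nonneg _)
  rw [← sub_eq_zero.1 hfix] at hlt
  exact lt_irrefl _ hlt

lemma apply_eq_self_of_norm_eq (hT : IsAveraged K T) {x : E} (hx : ‖T x‖ = ‖x‖) : T x = x := by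
  have h := hT.2 x
  rw [hx, sub_self, mul_zero] at h
  exact (sub_eq_zero.1 (by simpa using le_antisymm h (sq_nonneg _))).symm

lemma mul (hA : IsAveraged K A) (hB : IsAveraged L B) : IsAveraged (K + L) (B * A) := by
  refine ⟨add_nonneg hA.1 hB.1, fun x => ?_⟩
  set a := ‖x - A x‖
  set b := ‖A x - B (A x)‖
  have hu : 0 ≤ ‖x‖ ^ 2 - ‖A x‖ ^ 2 := by nlinarith [hA.norm_apply_le x, norm_nonneg (A x)]
  have hv : 0 ≤ ‖A x‖ ^ 2 - ‖B (A x)‖ ^ 2 := by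
    nlinarith [hB.norm_apply_le (A x), norm_nonneg (B (A x))]
  have htri : ‖x - B (A x)‖ ≤ a + b := norm_sub_le_norm_sub_add_norm_sub _ _ _
  have hab : 2 * (a * b) ≤ L * (‖x‖ ^ 2 - ‖A x‖ ^ 2) + K * (‖A x‖ ^ 2 - ‖B (A x)‖ ^ 2) := by
    have hprod : (a * b) ^ 2 ≤ (K * (‖x‖ ^ 2 - ‖A x‖ ^ 2)) * (L * (‖A x‖ ^ 2 - ‖B (A x)‖ ^ 2)) := by
      rw [mul_pow]
      exact mul_le_mul (hA.2 x) (hB.2 (A x)) (sq_nonneg _) (mul_nonneg hA.1 hu)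
    nlinarith [sq_nonneg (L * (‖x‖ ^ 2 - ‖A x‖ ^ 2) - K * (‖A x‖ ^ 2 - ‖B (A x)‖ ^ 2)),
      mul_nonneg (norm_nonneg (x - A x)) (norm_nonneg (A x - B (A x))),
      mul_nonneg hB.1 hu, mul_nonneg hA.1 hv]
  show ‖x - B (A x)‖ ^ 2 ≤ (K + L) * (‖x‖ ^ 2 - ‖B (A x)‖ ^ 2)
  nlinarith [pow_le_pow_left₀ (norm_nonneg _) htri 2, hA.2 x, hB.2 (A x)]

lemma apply_eq_self_of_mul_apply_eq (hA : IsAveraged K A) (hB : IsAveraged L B) {x : E}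
    (hx : (B * A) x = x) : A x = x ∧ B x = x := by
  have hAx : A x = x := hA.apply_eq_self_of_norm_eq <| le_antisymm (hA.norm_apply_le x) <|
    calc ‖x‖ = ‖B (A x)‖ := by rw [← mul_apply_eq_comp, hx]
      _ ≤ ‖A x‖ := hB.norm_apply_le _
  refine ⟨hAx, ?_⟩
  rwa [mul_apply_eq_comp, hAx] at hx

/-- Telescoping the defining inequality along the orbit of `x`, using that `‖Tʲx - Tʲ⁺¹x‖` is
non-increasing in `j`. -/
lemma succ_mul_sq_norm_pow_sub_pow_succ_add_le (hT : IsAveraged K T) (x : E) (n : ℕ) :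
    (n + 1) * ‖(T ^ n) x - (T ^ (n + 1)) x‖ ^ 2 + K * ‖(T ^ (n + 1)) x‖ ^ 2 ≤ K * ‖x‖ ^ 2 := by
  induction n with
  | zero =>
    simp only [Nat.cast_zero, zero_add, one_mul, pow_zero, pow_one, one_apply_eq_self]
    linarith [hT.2 x]
  | succ n ih =>
    have hstep := hT.2 ((T ^ (n + 1)) x)
    have hmono : ‖(T ^ (n + 1)) x - (T ^ (n + 1 + 1)) x‖ ≤ ‖(T ^ n) x - (T ^ (n + 1)) x‖ := by
      rw [pow_succ' T (n + 1), pow_succ' T n, mul_apply_eq_comp,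
        mul_apply_eq_comp, ← map_sub]
      exact hT.norm_apply_le _
    rw [← mul_apply_eq_comp, ← pow_succ'] at hstep
    rw [Nat.cast_succ]
    nlinarith [pow_le_pow_left₀ (norm_nonneg _) hmono 2]

lemma norm_pow_mul_one_sub_le (hT : IsAveraged K T) (n : ℕ) :
    ‖T ^ n * (1 - T)‖ ≤ √(K / (n + 1)) := by
  refine ContinuousLinearMap.opNorm_le_bound _ (Real.sqrt_nonneg _) fun x => ?_
  have happ : (T ^ n * (1 - T)) x = (T ^ n) x - (T ^ (n + 1)) x := by
    rw [pow_succ, mul_apply_eq_comp, mul_apply_eq_comp, sub_apply, map_sub]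
    rfl
  rw [happ, ← Real.sqrt_sq (norm_nonneg x), ← Real.sqrt_mul (by have := hT.1; positivity)]
  refine Real.le_sqrt_of_sq_le ?_
  rw [div_mul_eq_mul_div, le_div_iff₀ (by positivity)]
  nlinarith [hT.succ_mul_sq_norm_pow_sub_pow_succ_add_le x n, hT.1,
    sq_nonneg ‖(T ^ (n + 1)) x‖]

end IsAveraged

end Averaged

section PolynomialDecay

lemma tendsto_natCast_rpow_neg_atTop {a : ℝ} (ha : 0 < a) :
    Tendsto (fun n : ℕ => (n : ℝ) ^ (-a)) atTop (𝓝 0) :=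
  (tendsto_rpow_neg_atTop ha).comp tendsto_natCast_atTop_atTop

lemma tendsto_rpow_mul_of_isBigO {f : ℕ → ℝ} {a α : ℝ} (hα : α < a)
    (hf : f =O[atTop] fun n : ℕ => (n : ℝ) ^ (-a)) :
    Tendsto (fun n : ℕ => (n : ℝ) ^ α * f n) atTop (𝓝 0) := by
  refine ((isBigO_refl (fun n : ℕ => (n : ℝ) ^ α) atTop).mul hf).trans_tendsto ?_
  refine (tendsto_natCast_rpow_neg_atTop (sub_pos.2 hα)).congr' ?_
  filter_upwards [eventually_gt_atTop 0] with n hn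
  rw [← Real.rpow_add (Nat.cast_pos.2 hn)]
  ring_nf

lemma isBigO_natCast_rpow_neg_comp {f : ℕ → ℕ} {c a : ℝ} (hc : 0 < c) (ha : 0 ≤ a)
    (hf : ∀ᶠ n : ℕ in atTop, c * n ≤ f n) :
    (fun n => (f n : ℝ) ^ (-a)) =O[atTop] fun n : ℕ => (n : ℝ) ^ (-a) := by
  refine IsBigO.of_bound (c ^ (-a)) ?_
  filter_upwards [hf, eventually_gt_atTop 0] with n hfn hn
  have hcn : 0 < c * n := mul_pos hc (Nat.cast_pos.2 hn)
  rw [Real.norm_of_nonneg (by positivity), Real.norm_of_nonneg (by positivity),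
    ← Real.mul_rpow hc.le (Nat.cast_nonneg n)]
  exact Real.rpow_le_rpow_of_nonpos hcn hfn (neg_nonpos.2 ha)

variable {R : Type*} [NormedRing R]

/-- Splitting `n` in halves: `tⁿ (s r) = (t^(n - n/2) s) (t^(n/2) r)`. -/
lemma isBigO_norm_pow_mul_mul {t s r : R} (hts : Commute t s) {a b : ℝ} (ha : 0 ≤ a)
    (hb : 0 ≤ b) (hs : (fun n : ℕ => ‖t ^ n * s‖) =O[atTop] fun n => (n : ℝ) ^ (-a))
    (hr : (fun n : ℕ => ‖t ^ n * r‖) =O[atTop] fun n => (n : ℝ) ^ (-b)) :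
    (fun n : ℕ => ‖t ^ n * (s * r)‖) =O[atTop] fun n => (n : ℝ) ^ (-(a + b)) := by
  have hsplit : ∀ n, t ^ n * (s * r) = t ^ (n - n / 2) * s * (t ^ (n / 2) * r) := fun n => by
    conv_lhs => rw [← Nat.sub_add_cancel (Nat.div_le_self n 2), pow_add]
    simp only [mul_assoc, ← mul_assoc (t ^ (n / 2)) s, (hts.pow_left (n / 2)).eq]
  have hhalf : Tendsto (fun n : ℕ => n / 2) atTop atTop := Nat.tendsto_div_const_atTop two_ne_zero
  have hhalf' : Tendsto (fun n : ℕ => n - n / 2) atTop atTop :=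
    tendsto_atTop_mono (fun n => by omega) hhalf
  have hbound : (fun n : ℕ => ‖t ^ n * (s * r)‖)
      =O[atTop] fun n => ‖t ^ (n - n / 2) * s‖ * ‖t ^ (n / 2) * r‖ :=
    isBigO_of_le _ fun n => by
      rw [norm_norm, Real.norm_of_nonneg (by positivity), hsplit]
      exact norm_mul_le _ _
  refine (hbound.trans ((hs.comp_tendsto hhalf').mul (hr.comp_tendsto hhalf))).trans
    (((isBigO_natCast_rpow_neg_comp (c := 1 / 2) (by norm_num) ha ?_).mul
      (isBigO_natCast_rpow_neg_comp (c := 1 / 3) (by norm_num) hb ?_)).trans_eventuallyEq ?_)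
  · exact Eventually.of_forall fun n => by
      rw [one_div_mul_eq_div, div_le_iff₀ two_pos]
      exact_mod_cast (by omega : n ≤ (n - n / 2) * 2)
  · filter_upwards [eventually_ge_atTop 2] with n hn
    rw [one_div_mul_eq_div, div_le_iff₀ three_pos]
    exact_mod_cast (by omega : n ≤ n / 2 * 3)
  · filter_upwards [eventually_gt_atTop 0] with n hn
    rw [neg_add, Real.rpow_add (Nat.cast_pos.2 hn)]

end PolynomialDecay

section AveragedDecay

variable {𝕜 E : Type*} [NontriviallyNormedField 𝕜] [NormedAddCommGroup E] [NormedSpace 𝕜 E]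

lemma IsAveraged.isBigO_norm_pow_mul_one_sub {K : ℝ} {T : E →L[𝕜] E} (hT : IsAveraged K T) :
    (fun n : ℕ => ‖T ^ n * (1 - T)‖) =O[atTop] fun n : ℕ => (n : ℝ) ^ (-(1 / 2 : ℝ)) := by
  refine IsBigO.of_bound √K ?_
  filter_upwards [eventually_gt_atTop 0] with n hn
  have hn' : (0 : ℝ) < n := Nat.cast_pos.2 hn
  rw [norm_norm, Real.norm_of_nonneg (by positivity), Real.rpow_neg hn'.le,
    ← Real.sqrt_eq_rpow, ← div_eq_mul_inv, ← Real.sqrt_div' _ hn'.le]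
  exact (hT.norm_pow_mul_one_sub_le n).trans
    (Real.sqrt_le_sqrt (div_le_div_of_nonneg_left hT.1 hn' (by linarith)))

lemma IsAveraged.isBigO_norm_pow_mul_one_sub_pow {K : ℝ} {T : E →L[𝕜] E}
    (hT : IsAveraged K T) (k : ℕ) :
    (fun n : ℕ => ‖T ^ n * (1 - T) ^ k‖) =O[atTop] fun n : ℕ => (n : ℝ) ^ (-(k / 2 : ℝ)) := by
  induction k with
  | zero =>
    refine IsBigO.of_bound 1 (Eventually.of_forall fun n => ?_)
    rw [pow_zero, mul_one, norm_norm, Nat.cast_zero, zero_div, neg_zero, Real.rpow_zero,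
      norm_one, one_mul]
    exact ContinuousLinearMap.opNorm_le_bound _ zero_le_one fun x => by
      rw [one_mul]; exact norm_pow_apply_le_of_norm_apply_le hT.norm_apply_le n x
  | succ k ih =>
    have hcomm : Commute T ((1 - T) ^ k) :=
      ((Commute.one_right T).sub_right (Commute.refl T)).pow_right k
    have h := isBigO_norm_pow_mul_mul hcomm (by positivity) (by norm_num) ih
      hT.isBigO_norm_pow_mul_one_sub
    rw [← pow_succ] at h
    refine h.trans_eventuallyEq (Eventually.of_forall fun n => ?_)
    push_cast
    ring_nf

end AveragedDecay

section MittagLeffler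

lemma exists_seq_dist_apply_succ_lt {α : Type*} [PseudoMetricSpace α] {f : α → α} {D : Set α}
    (hD : D ⊆ closure (f '' D)) {y : α} (hy : y ∈ D) {σ : ℕ → ℝ} (hσ : ∀ m, 0 < σ m) :
    ∃ v : ℕ → α, v 0 = y ∧ ∀ m, v m ∈ D ∧ dist (f (v (m + 1))) (v m) < σ m := by
  have happrox : ∀ z ∈ D, ∀ δ > 0, ∃ w ∈ D, dist (f w) z < δ := fun z hz δ hδ => by
    obtain ⟨_, ⟨w, hw, rfl⟩, hdist⟩ := Metric.mem_closure_iff.1 (hD hz) δ hδ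
    exact ⟨w, hw, by rwa [dist_comm]⟩
  choose! F hFD hFdist using happrox
  let v : ℕ → α := fun m => Nat.rec y (fun m z => F z (σ m)) m
  have hv : ∀ m, v m ∈ D := fun m => by
    induction m with
    | zero => exact hy
    | succ m ih => exact hFD _ ih _ (hσ m)
  exact ⟨v, rfl, fun m => ⟨hv m, hFdist _ (hv m) _ (hσ m)⟩⟩

variable {𝕜 E : Type*} [NontriviallyNormedField 𝕜] [NormedAddCommGroup E] [NormedSpace 𝕜 E]

/-- Mittag-Leffler: choose `v₀ = y` and `A vₘ₊₁ ≈ vₘ` with errors shrinking fast enough that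
`m ↦ Aᵐ vₘ₊ₖ` converges for every `k`; the limits `gₖ` satisfy `Aᵏ gₖ = g₀ ≈ y`. -/
lemma subset_closure_iInter_range_pow [CompleteSpace E] (A : E →L[𝕜] E) {D : Set E}
    (hD : D ⊆ closure (A '' D)) : D ⊆ closure (⋂ k : ℕ, Set.range (A ^ k)) := by
  intro y hy
  refine Metric.mem_closure_iff.2 fun ε hε => ?_
  set c := ‖A‖ + 1
  have hc : 1 ≤ c := by linarith [norm_nonneg A]
  obtain ⟨v, hv0, hv⟩ := exists_seq_dist_apply_succ_lt hD hy
    (σ := fun m => ε / 4 / (2 * c) ^ m) fun m => by positivity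
  have hgeom : ∀ k m : ℕ,
      dist ((A ^ m) (v (m + k))) ((A ^ (m + 1)) (v (m + 1 + k))) ≤ ε / 2 / 2 / 2 ^ m := by
    intro k m
    rw [dist_eq_norm, show m + 1 + k = m + k + 1 by omega, pow_succ, mul_apply_eq_comp,
      ← map_sub]
    calc ‖(A ^ m) (v (m + k) - A (v (m + k + 1)))‖
        ≤ c ^ m * (ε / 4 / (2 * c) ^ (m + k)) :=
          (norm_pow_apply_le_pow_mul A (le_add_of_nonneg_right zero_le_one) m _).trans <|
          mul_le_mul_of_nonneg_left (by rw [← dist_eq_norm, dist_comm]; exact (hv _).2.le)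
            (by positivity)
      _ = ε / 2 / 2 / 2 ^ m / (2 * c) ^ k := by
          rw [pow_add, mul_pow]
          field_simp
          ring
      _ ≤ ε / 2 / 2 / 2 ^ m := div_le_self (by positivity) (one_le_pow₀ (by linarith))
  have hlim : ∀ k, ∃ g, Tendsto (fun m => (A ^ m) (v (m + k))) atTop (𝓝 g) := fun k =>
    cauchySeq_tendsto_of_complete (cauchySeq_of_le_geometric_two (hgeom k))
  choose g hg using hlim
  have hg_pow : ∀ k, (A ^ k) (g k) = g 0 := fun k => by
    refine tendsto_nhds_unique (((A ^ k).continuous.tendsto _).comp (hg k)) ?_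
    refine ((hg 0).comp (tendsto_add_atTop_nat k)).congr fun m => ?_
    simp only [Function.comp_apply, add_zero, ← mul_apply_eq_comp, ← pow_add, add_comm k m]
  refine ⟨g 0, Set.mem_iInter.2 fun k => ⟨g k, hg_pow k⟩, ?_⟩
  have hdist := dist_le_of_le_geometric_two_of_tendsto₀ (hgeom 0) (hg 0)
  rw [pow_zero, add_zero, hv0, one_apply_eq_self] at hdist
  linarith

end MittagLeffler

section FixedPoints

variable {𝕜 E : Type*} [RCLike 𝕜] [NormedAddCommGroup E] [InnerProductSpace 𝕜 E]
  {T : E →L[𝕜] E} {F : Submodule 𝕜 E}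

lemma orthogonal_range_one_sub_eq (hT : ∀ x, ‖T x‖ ≤ ‖x‖) (hfix : ∀ x, T x = x → x ∈ F)
    (horth : ∀ x, x - T x ∈ Fᗮ) : (LinearMap.range (1 - T).toLinearMap)ᗮ = F := by
  refine le_antisymm (fun x hx => hfix x ?_) ?_
  · have hinner : inner 𝕜 (x - T x) x = 0 := (Submodule.mem_orthogonal _ _).1 hx _ ⟨x, rfl⟩
    refine eq_of_norm_le_re_inner_eq_norm_sq (𝕜 := 𝕜) (hT x) ?_
    rw [inner_sub_left, sub_eq_zero] at hinner
    rw [← hinner, inner_self_eq_norm_sq]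
  · refine (Submodule.le_orthogonal_orthogonal F).trans (Submodule.orthogonal_le ?_)
    rintro _ ⟨y, rfl⟩
    exact horth y

variable [F.HasOrthogonalProjection]

lemma orthogonal_subset_closure_image_one_sub [CompleteSpace E] (hT : ∀ x, ‖T x‖ ≤ ‖x‖)
    (hfix : ∀ x, T x = x ↔ x ∈ F) (horth : ∀ x, x - T x ∈ Fᗮ) :
    (Fᗮ : Set E) ⊆ closure ((1 - T : E →L[𝕜] E) '' Fᗮ) := by
  have hclosure : (Fᗮ : Set E) = closure (Set.range (1 - T : E →L[𝕜] E)) := by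
    rw [← orthogonal_range_one_sub_eq hT (fun x => (hfix x).1) horth,
      Submodule.orthogonal_orthogonal_eq_closure, Submodule.topologicalClosure_coe,
      LinearMap.coe_range, ContinuousLinearMap.coe_coe]
  refine hclosure.trans_subset (closure_mono ?_)
  rintro _ ⟨y, rfl⟩
  refine ⟨y - F.starProjection y, F.sub_starProjection_mem_orthogonal y, ?_⟩
  rw [map_sub, sub_apply (1 : E →L[𝕜] E) T (F.starProjection y), one_apply_eq_self,
    (hfix _).2 (F.starProjection_apply_mem y), sub_self, sub_zero]

lemma dense_sup_iInf_range_one_sub_pow [CompleteSpace E] (hT : ∀ x, ‖T x‖ ≤ ‖x‖)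
    (hfix : ∀ x, T x = x ↔ x ∈ F) (horth : ∀ x, x - T x ∈ Fᗮ) :
    Dense ((F ⊔ ⨅ k : ℕ, LinearMap.range ((1 - T) ^ k).toLinearMap : Submodule 𝕜 E) : Set E) := by
  rw [Submodule.dense_iff_topologicalClosure_eq_top, eq_top_iff,
    ← Submodule.sup_orthogonal_of_hasOrthogonalProjection (K := F)]
  refine sup_le (le_sup_left.trans (Submodule.le_topologicalClosure _)) fun x hx => ?_
  rw [← SetLike.mem_coe, Submodule.topologicalClosure_coe]
  refine closure_mono (fun y hy => ?_)
    (subset_closure_iInter_range_pow (1 - T) (orthogonal_subset_closure_image_one_sub hT hfix horth) hx)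
  exact Submodule.mem_sup_right ((Submodule.mem_iInf _).2 fun k => Set.mem_iInter.1 hy k)

lemma IsAveraged.isBigO_norm_pow_apply_sub_starProjection {K : ℝ} (hT : IsAveraged K T)
    (hfix : ∀ x ∈ F, T x = x) (horth : ∀ x, x - T x ∈ Fᗮ) {x : E}
    (hx : x ∈ F ⊔ ⨅ k : ℕ, LinearMap.range ((1 - T) ^ k).toLinearMap) (k : ℕ) :
    (fun n : ℕ => ‖(T ^ n) x - F.starProjection x‖) =O[atTop]
      fun n : ℕ => (n : ℝ) ^ (-(k / 2 : ℝ)) := by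
  obtain ⟨m, hm, g, hg, rfl⟩ := Submodule.mem_sup.1 hx
  have hrange : ∀ j : ℕ, ∃ u, ((1 - T) ^ j) u = g := fun j =>
    LinearMap.mem_range.1 ((Submodule.mem_iInf _).1 hg j)
  have hPg : F.starProjection g = 0 := by
    obtain ⟨u, rfl⟩ := hrange 1
    exact (Submodule.starProjection_apply_eq_zero_iff F).2 (horth u)
  have hreduce : ∀ n, (T ^ n) (m + g) - F.starProjection (m + g) = (T ^ n) g := fun n => by
    rw [map_add, map_add, pow_apply_eq_iterate, Function.iterate_fixed (hfix m hm),
      Submodule.starProjection_eq_self_iff.2 hm, hPg]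
    abel
  obtain ⟨u, rfl⟩ := hrange k
  refine IsBigO.trans (IsBigO.of_bound ‖u‖ (Eventually.of_forall fun n => ?_))
    (hT.isBigO_norm_pow_mul_one_sub_pow k)
  rw [hreduce, norm_norm, norm_norm, mul_comm, ← mul_apply_eq_comp]
  exact ContinuousLinearMap.le_opNorm _ _

end FixedPoints

section AlternatingProjections

variable {X : Type*} [NormedAddCommGroup X] [InnerProductSpace ℂ X]

lemma projOnto_eq_starProjection (K : Submodule ℂ X) [K.HasOrthogonalProjection] :
    projOnto K = K.starProjection :=
  rfl

lemma isAveraged_projOnto (K : Submodule ℂ X) [K.HasOrthogonalProjection] :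
    IsAveraged 1 (projOnto K) := by
  refine ⟨zero_le_one, fun x => ?_⟩
  have hpyth := K.norm_sq_eq_add_norm_sq_starProjection x
  rw [Submodule.starProjection_orthogonal_val] at hpyth
  rw [projOnto_eq_starProjection]
  linarith

variable {N : ℕ} (M : Fin N → Submodule ℂ X) [∀ i, CompleteSpace (M i)]

lemma cycleProd_zero : cycleProd M 0 = 1 := by
  simp [cycleProd]

lemma cycleProd_succ {k : ℕ} (hk : k < N) :
    cycleProd M (k + 1) = projOnto (M ⟨k, hk⟩) * cycleProd M k := by
  have hget : (List.ofFn fun i => projOnto (M i))[k]? = some (projOnto (M ⟨k, hk⟩)) := by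
    rw [List.getElem?_eq_getElem (by simpa using hk)]
    simp
  simp [cycleProd, List.take_add_one, hget]

lemma isAveraged_cycleProd {k : ℕ} (hk : k ≤ N) : IsAveraged k (cycleProd M k) := by
  induction k with
  | zero => exact ⟨Nat.cast_nonneg 0, fun x => by simp [cycleProd_zero]⟩
  | succ k ih =>
    rw [cycleProd_succ M hk, Nat.cast_succ]
    exact (ih (Nat.le_of_succ_le hk)).mul (isAveraged_projOnto _)

lemma cycleProd_apply_eq_self_iff {k : ℕ} (hk : k ≤ N) {x : X} :
    cycleProd M k x = x ↔ ∀ i : Fin N, (i : ℕ) < k → x ∈ M i := by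
  induction k with
  | zero => simp [cycleProd_zero]
  | succ k ih =>
    have hkN : k < N := hk
    rw [cycleProd_succ M hkN]
    constructor
    · intro hx i hi
      obtain ⟨hCk, hPk⟩ := (isAveraged_cycleProd M hkN.le).apply_eq_self_of_mul_apply_eq
        (isAveraged_projOnto _) hx
      rcases (Nat.lt_succ_iff.1 hi).lt_or_eq with hi | hi
      · exact (ih hkN.le).1 hCk i hi
      · rw [projOnto_eq_starProjection, Submodule.starProjection_eq_self_iff] at hPk
        rwa [show i = ⟨k, hkN⟩ from Fin.ext hi]
    · intro hx
      rw [mul_apply_eq_comp, (ih hkN.le).2 fun i hi => hx i (by omega),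
        projOnto_eq_starProjection, Submodule.starProjection_eq_self_iff]
      exact hx ⟨k, hkN⟩ (Nat.lt_succ_self k)

lemma cycleProd_apply_eq_self_iff_mem_iInf {x : X} : cycleProd M N x = x ↔ x ∈ ⨅ i, M i := by
  rw [cycleProd_apply_eq_self_iff M le_rfl, Submodule.mem_iInf]
  exact ⟨fun hx i => hx i i.isLt, fun hx i _ => hx i⟩

lemma sub_cycleProd_apply_mem_orthogonal {k : ℕ} (hk : k ≤ N) (x : X) :
    x - cycleProd M k x ∈ (⨅ i, M i)ᗮ := by
  induction k with
  | zero => simp [cycleProd_zero]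
  | succ k ih =>
    have hkN : k < N := hk
    rw [cycleProd_succ M hkN, mul_apply_eq_comp, ← sub_add_sub_cancel x (cycleProd M k x)]
    exact add_mem (ih hkN.le) (Submodule.orthogonal_le (iInf_le M ⟨k, hkN⟩)
      (Submodule.sub_starProjection_mem_orthogonal _))

end AlternatingProjections

theorem alternatingProjections_convergence_and_superpolynomial_rates_general
    {X : Type*} [NormedAddCommGroup X] [InnerProductSpace ℂ X] [CompleteSpace X]
    {N : ℕ} (M : Fin N → Submodule ℂ X) [∀ i, CompleteSpace (M i)]
    [CompleteSpace (⨅ i, M i : Submodule ℂ X)] :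
    (∀ x : X,
      Tendsto (fun n : ℕ => ‖((cycleProd M N) ^ n) x - (projOnto (⨅ i, M i)) x‖)
        atTop (𝓝 0)) ∧
    ∃ Xinf : Submodule ℂ X, Dense (Xinf : Set X) ∧
      ∀ x ∈ Xinf, ∀ α : ℝ, 0 < α →
        Tendsto
          (fun n : ℕ =>
            (n : ℝ) ^ α * ‖((cycleProd M N) ^ n) x - (projOnto (⨅ i, M i)) x‖)
          atTop (𝓝 0) := by
  set T := cycleProd M N
  have hT : IsAveraged N T := isAveraged_cycleProd M le_rfl
  have hfix : ∀ x, T x = x ↔ x ∈ ⨅ i, M i := fun x => cycleProd_apply_eq_self_iff_mem_iInf M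
  have horth : ∀ x, x - T x ∈ (⨅ i, M i)ᗮ := sub_cycleProd_apply_mem_orthogonal M le_rfl
  have hdense := dense_sup_iInf_range_one_sub_pow hT.norm_apply_le hfix horth
  have hdecay := fun x hx => hT.isBigO_norm_pow_apply_sub_starProjection (fun x => (hfix x).2)
    horth (x := x) hx
  refine ⟨fun x => ?_, _, hdense, fun x hx α hα => ?_⟩
  · refine tendsto_iff_norm_sub_tendsto_zero.1
      (tendsto_pow_apply_of_dense hT.norm_apply_le hdense (fun y hy => ?_) x)
    exact tendsto_iff_norm_sub_tendsto_zero.2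
      ((hdecay y hy 1).trans_tendsto (tendsto_natCast_rpow_neg_atTop (by norm_num)))
  · obtain ⟨k, hk⟩ := exists_nat_gt (2 * α)
    exact tendsto_rpow_mul_of_isBigO (by linarith) (hdecay x hx k)

/-- **Convergence of the alternating projections method, with super-polynomially fast
convergence on a dense subspace.** `‖Tⁿx - P_M x‖ → 0` for every `x ∈ X`, and there is
a dense subspace `X_∞` such that `n^α ‖Tⁿx - P_M x‖ → 0` for all `x ∈ X_∞`, `α > 0`. -/
theorem alternatingProjections_convergence_and_superpolynomial_rates
    {X : Type*} [NormedAddCommGroup X] [InnerProductSpace ℂ X] [CompleteSpace X]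
    {N : ℕ} (hN : 2 ≤ N) (M : Fin N → Submodule ℂ X) [∀ i, CompleteSpace (M i)]
    [CompleteSpace (⨅ i, M i : Submodule ℂ X)] :
    (∀ x : X,
      Tendsto (fun n : ℕ => ‖((cycleProd M N) ^ n) x - (projOnto (⨅ i, M i)) x‖)
        atTop (𝓝 0)) ∧
    ∃ Xinf : Submodule ℂ X, Dense (Xinf : Set X) ∧
      ∀ x ∈ Xinf, ∀ α : ℝ, 0 < α →
        Tendsto
          (fun n : ℕ =>
            (n : ℝ) ^ α * ‖((cycleProd M N) ^ n) x - (projOnto (⨅ i, M i)) x‖)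
          atTop (𝓝 0) :=
  alternatingProjections_convergence_and_superpolynomial_rates_general M
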